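/- arXiv:math/0703570 — 4 statements merged into one kernel-verified Lean document; each statement's English description precedes it below -/
import Mathlib

section
/- Let r ≥ 2, d ≥ 1 be integers, b ≥ 0 a real, and N ≥ 2 an integer. Suppose Φ_f ≥ 0 satisfy f·Φ_f ≤ r^{df} + 1 + 2b·r^{df−f/2} for all 1 ≤ f ≤ N. Then ∑_{f=1}^{N} Φ_f · log(r^{df}/(r^{df}−1)) − S₀(N) ≤ 8/(N·r^{dN/2}) + 12b·r^{−N/4}/(N·r^{dN/2}), where S₀(N) = ∑_{f=1}^{N} Φ_f · ∑_{m=1}^{⌊N/f⌋} 1/(m·r^{dfm}). -/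
/-!
Write `x = r^(df)`, `u = r^(-f/2)` and `M = ⌊N/f⌋`. The `f`-th term is `Φ_f` times the tail of
`log (x/(x-1)) = ∑ 1/(m x^m)` after `M` terms, which is at most `1/((M+1) x^M (x-1))`.
Since `f (M+1) > N` and `(x + 1 + 2bxu)/(x-1) ≤ 3 + 4bu` for `x ≥ 2`, the term is at most
`(3 + 4bu) / (N r^(dfM))`. In the variable `y = r^(-1/4)` all exponents are integers, and the
resulting sums are dominated by geometric series, separately for `f ≤ N/2`, where
`fM ≥ N + 1 - f`, and for `f > N/2`, where `fM ≥ f`.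
-/

open Finset

lemma sum_pow_le_one_sub_inv {c : ℝ} (hc0 : 0 ≤ c) (hc1 : c < 1) {s : Finset ℕ} {e : ℕ → ℕ}
    (he : Set.InjOn e s) : ∑ i ∈ s, c ^ e i ≤ (1 - c)⁻¹ := by
  rw [← sum_image he, ← tsum_geometric_of_lt_one hc0 hc1]
  exact (summable_geometric_of_lt_one hc0 hc1).sum_le_tsum _ fun i _ => pow_nonneg hc0 i

lemma sum_le_mul_one_sub_inv {c a : ℝ} (hc0 : 0 ≤ c) (hc1 : c < 1) (ha : 0 ≤ a) {s : Finset ℕ}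
    {e : ℕ → ℕ} (he : Set.InjOn e s) {g : ℕ → ℝ} (hg : ∀ i ∈ s, g i ≤ a * c ^ e i) :
    ∑ i ∈ s, g i ≤ a * (1 - c)⁻¹ :=
  calc ∑ i ∈ s, g i ≤ ∑ i ∈ s, a * c ^ e i := sum_le_sum hg
    _ = a * ∑ i ∈ s, c ^ e i := (mul_sum _ _ _).symm
    _ ≤ a * (1 - c)⁻¹ := mul_le_mul_of_nonneg_left (sum_pow_le_one_sub_inv hc0 hc1 he) ha

lemma injOn_const_sub_Ioc (K : ℕ) : Set.InjOn (K - ·) (Ioc 0 K : Set ℕ) := by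
  intro a ha b hb h
  simp only [coe_Ioc, Set.mem_Ioc] at ha hb h
  omega

lemma injOn_sub_const_Ioc (K N : ℕ) : Set.InjOn (· - (K + 1)) (Ioc K N : Set ℕ) := by
  intro a ha b hb h
  simp only [coe_Ioc, Set.mem_Ioc] at ha hb h
  omega

lemma sum_Icc_one_eq_add {K N : ℕ} (hK : K ≤ N) (g : ℕ → ℝ) :
    ∑ f ∈ Icc 1 N, g f = ∑ f ∈ Ioc 0 K, g f + ∑ f ∈ Ioc K N, g f :=
  (sum_Ioc_consecutive g (Nat.zero_le K) hK).symm

lemma succ_le_mul_div_add {N f : ℕ} (hf : 0 < f) : N + 1 ≤ f * (N / f) + f := by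
  have := Nat.lt_mul_div_succ N hf
  rw [mul_add_one] at this
  omega

lemma le_mul_div_of_le {N f : ℕ} (hf : 0 < f) (hfN : f ≤ N) : f ≤ f * (N / f) :=
  Nat.le_mul_of_pos_right f (Nat.div_pos hfN hf)

lemma exponent_bounds_of_le_half {d N K f P : ℕ} (hd : 1 ≤ d) (hK : 2 * K ≤ N) (hfK : f ≤ K)
    (hP : N + 1 ≤ P + f) :
    2 * d * N + 4 + 4 * (K - f) ≤ 4 * (d * P) ∧
      2 * d * N + N + 4 + 2 * (K - f) ≤ 4 * (d * P) + 2 * f := by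
  obtain ⟨j, rfl⟩ := Nat.exists_eq_add_of_le hfK
  have := Nat.mul_le_mul_left d hP
  have : N + 2 + 2 * j ≤ d * (N + 2 + 2 * j) := Nat.le_mul_of_pos_left _ hd
  simp only [Nat.add_sub_cancel_left]
  constructor <;> nlinarith

lemma exponent_bounds_of_half_lt {d N K f P : ℕ} (hd : 1 ≤ d) (hK : N ≤ 2 * K + 1)
    (hfK : K + 1 ≤ f) (hP : f ≤ P) :
    2 * d * N + 2 + 4 * (f - (K + 1)) ≤ 4 * (d * P) ∧
      2 * d * N + N + 3 + 4 * (f - (K + 1)) ≤ 4 * (d * P) + 2 * f := by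
  obtain ⟨j, rfl⟩ := Nat.exists_eq_add_of_le hfK
  have := Nat.mul_le_mul_left d hP
  have : N + 1 + 2 * j ≤ d * (N + 1 + 2 * j) := Nat.le_mul_of_pos_left _ hd
  simp only [Nat.add_sub_cancel_left]
  constructor <;> nlinarith

lemma le_one_of_pow_four_le_half {y : ℝ} (hy : y ^ 4 ≤ 1 / 2) : y ≤ 1 := by
  nlinarith [sq_nonneg (y ^ 2 - 1), sq_nonneg (y - 1)]

lemma sq_le_of_pow_four_le_half {y : ℝ} (hy : y ^ 4 ≤ 1 / 2) : y ^ 2 ≤ 17 / 24 := by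
  nlinarith [sq_nonneg (y ^ 2 - 17 / 24), sq_nonneg y]

lemma pow_three_le_of_pow_four_le_half {y : ℝ} (hy0 : 0 ≤ y) (hy : y ^ 4 ≤ 1 / 2) :
    y ^ 3 ≤ 3 / 5 := by
  nlinarith [sq_nonneg (y ^ 3 - 3 / 5), sq_nonneg y, pow_nonneg hy0 3]

lemma three_mul_sum_pow_mul_div_le {y : ℝ} (hy0 : 0 ≤ y) (hy : y ^ 4 ≤ 1 / 2) {d : ℕ}
    (hd : 1 ≤ d) (N : ℕ) :
    3 * ∑ f ∈ Icc 1 N, y ^ (4 * (d * (f * (N / f)))) ≤ 8 * y ^ (2 * d * N) := by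
  have hy1 := le_one_of_pow_four_le_half hy
  have hy2 := sq_le_of_pow_four_le_half hy
  have hy4 : y ^ 4 < 1 := by linarith
  have hlow : ∑ f ∈ Ioc 0 (N / 2), y ^ (4 * (d * (f * (N / f)))) ≤
      y ^ (2 * d * N) * y ^ 4 * (1 - y ^ 4)⁻¹ := by
    refine sum_le_mul_one_sub_inv (by positivity) hy4 (by positivity)
      (injOn_const_sub_Ioc _) fun f hf => ?_
    obtain ⟨hf0, hfK⟩ := mem_Ioc.1 hf
    rw [← pow_mul, ← pow_add, ← pow_add]
    exact pow_le_pow_of_le_one hy0 hy1 (exponent_bounds_of_le_half hd (by omega) hfK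
      (succ_le_mul_div_add hf0)).1
  have hhigh : ∑ f ∈ Ioc (N / 2) N, y ^ (4 * (d * (f * (N / f)))) ≤
      y ^ (2 * d * N) * y ^ 2 * (1 - y ^ 4)⁻¹ := by
    refine sum_le_mul_one_sub_inv (by positivity) hy4 (by positivity)
      (injOn_sub_const_Ioc _ _) fun f hf => ?_
    obtain ⟨hfK, hfN⟩ := mem_Ioc.1 hf
    rw [← pow_mul, ← pow_add, ← pow_add]
    exact pow_le_pow_of_le_one hy0 hy1 (exponent_bounds_of_half_lt hd (by omega) hfK
      (le_mul_div_of_le (by omega) hfN)).1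
  have hinv : (1 - y ^ 4)⁻¹ ≤ 2 := by rw [inv_le_comm₀ (by linarith) two_pos]; linarith
  rw [sum_Icc_one_eq_add (Nat.div_le_self N 2)]
  calc 3 * (_ + _) ≤ 3 * (y ^ (2 * d * N) * (y ^ 4 + y ^ 2) * (1 - y ^ 4)⁻¹) := by
        rw [mul_add (y ^ (2 * d * N)), add_mul]; gcongr
    _ ≤ 3 * (y ^ (2 * d * N) * (1 / 2 + 17 / 24) * 2) := by gcongr
    _ ≤ 8 * y ^ (2 * d * N) := by nlinarith [pow_nonneg hy0 (2 * d * N)]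

lemma four_mul_sum_pow_mul_div_add_le {y : ℝ} (hy0 : 0 ≤ y) (hy : y ^ 4 ≤ 1 / 2) {d : ℕ}
    (hd : 1 ≤ d) (N : ℕ) :
    4 * ∑ f ∈ Icc 1 N, y ^ (4 * (d * (f * (N / f))) + 2 * f) ≤ 12 * y ^ (2 * d * N + N) := by
  have hy1 := le_one_of_pow_four_le_half hy
  have hy2 := sq_le_of_pow_four_le_half hy
  have hy3 := pow_three_le_of_pow_four_le_half hy0 hy
  have hy4 : y ^ 4 < 1 := by linarith
  have hlow : ∑ f ∈ Ioc 0 (N / 2), y ^ (4 * (d * (f * (N / f))) + 2 * f) ≤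
      y ^ (2 * d * N + N) * y ^ 4 * (1 - y ^ 2)⁻¹ := by
    refine sum_le_mul_one_sub_inv (by positivity) (by linarith) (by positivity)
      (injOn_const_sub_Ioc _) fun f hf => ?_
    obtain ⟨hf0, hfK⟩ := mem_Ioc.1 hf
    rw [← pow_mul, ← pow_add, ← pow_add]
    exact pow_le_pow_of_le_one hy0 hy1 (exponent_bounds_of_le_half hd (by omega) hfK
      (succ_le_mul_div_add hf0)).2
  have hhigh : ∑ f ∈ Ioc (N / 2) N, y ^ (4 * (d * (f * (N / f))) + 2 * f) ≤
      y ^ (2 * d * N + N) * y ^ 3 * (1 - y ^ 4)⁻¹ := by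
    refine sum_le_mul_one_sub_inv (by positivity) hy4 (by positivity)
      (injOn_sub_const_Ioc _ _) fun f hf => ?_
    obtain ⟨hfK, hfN⟩ := mem_Ioc.1 hf
    rw [← pow_mul, ← pow_add, ← pow_add]
    exact pow_le_pow_of_le_one hy0 hy1 (exponent_bounds_of_half_lt hd (by omega) hfK
      (le_mul_div_of_le (by omega) hfN)).2
  have hinv2 : (1 - y ^ 2)⁻¹ ≤ 24 / 7 := by
    rw [inv_le_comm₀ (by linarith) (by norm_num)]; linarith
  have hinv2_nonneg : 0 ≤ (1 - y ^ 2)⁻¹ := inv_nonneg.2 (by linarith)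
  have hinv4 : (1 - y ^ 4)⁻¹ ≤ 2 := by rw [inv_le_comm₀ (by linarith) two_pos]; linarith
  rw [sum_Icc_one_eq_add (Nat.div_le_self N 2)]
  calc 4 * (_ + _) ≤
        4 * (y ^ (2 * d * N + N) * (y ^ 4 * (1 - y ^ 2)⁻¹ + y ^ 3 * (1 - y ^ 4)⁻¹)) := by
        rw [mul_add (y ^ (2 * d * N + N)), ← mul_assoc, ← mul_assoc]; gcongr
    _ ≤ 4 * (y ^ (2 * d * N + N) * (1 / 2 * (24 / 7) + 3 / 5 * 2)) := by gcongr
    _ ≤ 12 * y ^ (2 * d * N + N) := by nlinarith [pow_nonneg hy0 (2 * d * N + N)]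

noncomputable def logTail (x : ℝ) (M : ℕ) : ℝ :=
  Real.log (x / (x - 1)) - ∑ m ∈ Icc 1 M, 1 / ((m : ℝ) * x ^ m)

lemma hasSum_logTail {x : ℝ} (hx : 1 < x) (M : ℕ) :
    HasSum (fun n : ℕ => x⁻¹ ^ (n + M + 1) / ((n + M : ℕ) + 1 : ℝ)) (logTail x M) := by
  have hx0 : 0 < x := by linarith
  have habs : |x⁻¹| < 1 := by rw [abs_of_pos (inv_pos.2 hx0)]; exact inv_lt_one_of_one_lt₀ hx
  have hlog : -Real.log (1 - x⁻¹) = Real.log (x / (x - 1)) := by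
    rw [← Real.log_inv]; congr 1; field_simp
  have hpartial : ∑ m ∈ Icc 1 M, 1 / ((m : ℝ) * x ^ m) =
      ∑ n ∈ range M, x⁻¹ ^ (n + 1) / ((n : ℝ) + 1) := by
    rw [← Ico_add_one_right_eq_Icc, sum_Ico_eq_sum_range, Nat.add_sub_cancel]
    refine sum_congr rfl fun n _ => ?_
    rw [add_comm 1 n, inv_pow, Nat.cast_add_one, div_eq_mul_inv, one_mul, mul_inv,
      div_eq_inv_mul, mul_comm]
  have := Real.hasSum_pow_div_log_of_abs_lt_one habs
  rw [hlog, ← hasSum_nat_add_iff' M] at this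
  rw [logTail, hpartial]
  simpa only [add_right_comm _ M 1, Nat.cast_add] using this

lemma logTail_nonneg {x : ℝ} (hx : 1 < x) (M : ℕ) : 0 ≤ logTail x M := by
  have : 0 < x := by linarith
  exact (hasSum_logTail hx M).nonneg fun n => by positivity

lemma logTail_le {x : ℝ} (hx : 1 < x) (M : ℕ) :
    logTail x M ≤ 1 / ((M + 1) * x ^ M * (x - 1)) := by
  have hx0 : 0 < x := by linarith
  have hy0 : 0 ≤ x⁻¹ := inv_nonneg.2 hx0.le
  have hy1 : x⁻¹ < 1 := inv_lt_one_of_one_lt₀ hx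
  have hgeom := (hasSum_geometric_of_lt_one hy0 hy1).mul_left (x⁻¹ ^ (M + 1) / (M + 1))
  refine (hasSum_le (fun n => ?_) (hasSum_logTail hx M) hgeom).trans_eq ?_
  · rw [div_mul_eq_mul_div, ← pow_add, add_comm (M + 1), ← add_assoc]
    gcongr
    linarith [n.cast_nonneg (α := ℝ)]
  · have : x - 1 ≠ 0 := by linarith
    simp only [inv_pow]
    field_simp
    ring

lemma mul_logTail_le {x u b φ F N : ℝ} {M : ℕ} (hx : 2 ≤ x) (hu : 0 ≤ u) (hb : 0 ≤ b)
    (hF : 0 < F) (hN : 0 < N) (hNF : N ≤ F * (M + 1)) (hφ : F * φ ≤ x + 1 + 2 * b * (x * u)) :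
    φ * logTail x M ≤ (3 + 4 * b * u) / (N * x ^ M) := by
  have hx1 : 1 < x := by linarith
  have hφ' : φ ≤ (x + 1 + 2 * b * (x * u)) / F := by rw [le_div_iff₀ hF]; linarith
  have hnum : (x + 1 + 2 * b * (x * u)) / (x - 1) ≤ 3 + 4 * b * u := by
    rw [div_le_iff₀ (by linarith)]
    nlinarith [mul_nonneg (mul_nonneg hb hu) (by linarith : (0 : ℝ) ≤ x - 2)]
  calc φ * logTail x M ≤ (x + 1 + 2 * b * (x * u)) / F * logTail x M :=
        mul_le_mul_of_nonneg_right hφ' (logTail_nonneg hx1 M)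
    _ ≤ (x + 1 + 2 * b * (x * u)) / F * (1 / ((M + 1) * x ^ M * (x - 1))) := by
        gcongr
        exact logTail_le hx1 M
    _ = (x + 1 + 2 * b * (x * u)) / (x - 1) / (F * (M + 1) * x ^ M) := by
        field_simp
    _ ≤ (3 + 4 * b * u) / (N * x ^ M) := by
        gcongr

lemma mul_logTail_pow_le {r y : ℝ} (hr : 2 ≤ r) (hy0 : 0 ≤ y)
    (hry : ∀ n : ℕ, (r ^ n)⁻¹ = y ^ (4 * n)) {d N f : ℕ} (hd : 1 ≤ d) (hf1 : 1 ≤ f)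
    (hfN : f ≤ N) {b φ : ℝ} (hb : 0 ≤ b)
    (hφ : f * φ ≤ r ^ (d * f) + 1 + 2 * b * (r ^ (d * f) * y ^ (2 * f))) :
    φ * logTail (r ^ (d * f)) (N / f) ≤
      (3 * y ^ (4 * (d * (f * (N / f)))) + 4 * b * y ^ (4 * (d * (f * (N / f))) + 2 * f)) / N := by
  have hx : 2 ≤ r ^ (d * f) := hr.trans (le_self_pow₀ (by linarith) (by positivity))
  have hNF : (N : ℝ) ≤ f * ((N / f : ℕ) + 1) := by
    exact_mod_cast (Nat.lt_mul_div_succ N hf1).le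
  have hpow : ((r ^ (d * f)) ^ (N / f))⁻¹ = y ^ (4 * (d * (f * (N / f)))) := by
    rw [← pow_mul, mul_assoc, hry]
  calc _ ≤ (3 + 4 * b * y ^ (2 * f)) / (N * (r ^ (d * f)) ^ (N / f)) :=
        mul_logTail_le hx (by positivity) hb (by exact_mod_cast hf1)
          (by exact_mod_cast hf1.trans hfN) hNF hφ
    _ = _ := by
        rw [mul_comm (N : ℝ), ← div_div, div_eq_mul_inv _ (_ ^ _), hpow]
        ring

lemma rpow_neg_quarter_pow {a : ℝ} (ha : 0 ≤ a) (n : ℕ) :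
    (a ^ (-(1 / 4 : ℝ))) ^ n = a ^ (-(n : ℝ) / 4) := by
  rw [← Real.rpow_natCast, ← Real.rpow_mul ha]
  ring_nf

lemma inv_pow_eq_rpow_neg_quarter_pow {a : ℝ} (ha : 0 ≤ a) (n : ℕ) :
    (a ^ n)⁻¹ = (a ^ (-(1 / 4 : ℝ))) ^ (4 * n) := by
  rw [rpow_neg_quarter_pow ha, ← Real.rpow_natCast, ← Real.rpow_neg ha]
  push_cast
  ring_nf

lemma rpow_mul_sub_half {a : ℝ} (ha : 0 < a) (k f : ℕ) :
    a ^ ((k * f : ℝ) - (f : ℝ) / 2) = a ^ (k * f) * (a ^ (-(1 / 4 : ℝ))) ^ (2 * f) := by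
  rw [rpow_neg_quarter_pow ha.le, ← Real.rpow_natCast, ← Real.rpow_add ha]
  push_cast
  ring_nf

lemma inv_rpow_mul_div_two {a : ℝ} (ha : 0 ≤ a) (k N : ℕ) :
    (a ^ ((k * N : ℝ) / 2))⁻¹ = (a ^ (-(1 / 4 : ℝ))) ^ (2 * k * N) := by
  rw [rpow_neg_quarter_pow ha, ← Real.rpow_neg ha]
  push_cast
  ring_nf

theorem stmt_13_general (r d N : ℕ) (hr : 2 ≤ r) (hd : 1 ≤ d)
    (b : ℝ) (hb : 0 ≤ b) (Φ : ℕ → ℝ)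
    (h : ∀ f, 1 ≤ f → f ≤ N → (f : ℝ) * Φ f ≤
        (r : ℝ) ^ (d * f) + 1 + 2 * b * (r : ℝ) ^ ((d * f : ℝ) - (f : ℝ) / 2)) :
    (∑ f ∈ Finset.Icc 1 N, Φ f * Real.log ((r : ℝ) ^ (d * f) / ((r : ℝ) ^ (d * f) - 1))) -
        (∑ f ∈ Finset.Icc 1 N, Φ f * ∑ m ∈ Finset.Icc 1 (N / f), 1 / ((m : ℝ) * (r : ℝ) ^ (d * f * m))) ≤
      8 / ((N : ℝ) * (r : ℝ) ^ ((d * N : ℝ) / 2)) +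
        12 * b * (r : ℝ) ^ (-(N : ℝ) / 4) / ((N : ℝ) * (r : ℝ) ^ ((d * N : ℝ) / 2)) := by
  have hr2 : (2 : ℝ) ≤ r := by exact_mod_cast hr
  set y : ℝ := (r : ℝ) ^ (-(1 / 4 : ℝ))
  have hy0 : 0 ≤ y := by positivity
  have hry : ∀ n : ℕ, ((r : ℝ) ^ n)⁻¹ = y ^ (4 * n) :=
    inv_pow_eq_rpow_neg_quarter_pow r.cast_nonneg
  have hy4 : y ^ 4 ≤ 1 / 2 := by
    rw [← mul_one 4, ← hry, pow_one, one_div]; exact inv_anti₀ two_pos hr2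
  calc _ = ∑ f ∈ Icc 1 N, Φ f * logTail ((r : ℝ) ^ (d * f)) (N / f) := by
        rw [← sum_sub_distrib]
        exact sum_congr rfl fun f _ => by simp only [logTail, mul_sub, ← pow_mul]
    _ ≤ ∑ f ∈ Icc 1 N, (3 * y ^ (4 * (d * (f * (N / f)))) +
          4 * b * y ^ (4 * (d * (f * (N / f))) + 2 * f)) / N := by
        refine sum_le_sum fun f hf => ?_
        obtain ⟨hf1, hfN⟩ := mem_Icc.1 hf
        have hΦf := h f hf1 hfN
        rw [rpow_mul_sub_half (by linarith)] at hΦf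
        exact mul_logTail_pow_le hr2 hy0 hry hd hf1 hfN hb hΦf
    _ = (3 * ∑ f ∈ Icc 1 N, y ^ (4 * (d * (f * (N / f)))) +
          b * (4 * ∑ f ∈ Icc 1 N, y ^ (4 * (d * (f * (N / f))) + 2 * f))) / N := by
        rw [← sum_div, sum_add_distrib, ← mul_sum, ← mul_sum]
        ring
    _ ≤ (8 * y ^ (2 * d * N) + b * (12 * y ^ (2 * d * N + N))) / N := by
        gcongr (?_ + b * ?_) / _
        · exact three_mul_sum_pow_mul_div_le hy0 hy4 hd N
        · exact four_mul_sum_pow_mul_div_add_le hy0 hy4 hd N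
    _ = _ := by
        rw [pow_add, ← inv_rpow_mul_div_two r.cast_nonneg, rpow_neg_quarter_pow r.cast_nonneg]
        field_simp

theorem stmt_13 (r d N : ℕ) (hr : 2 ≤ r) (hd : 1 ≤ d) (hN : 2 ≤ N)
    (b : ℝ) (hb : 0 ≤ b) (Φ : ℕ → ℝ) (hΦ : ∀ f, 0 ≤ Φ f)
    (h : ∀ f, 1 ≤ f → f ≤ N → (f : ℝ) * Φ f ≤
        (r : ℝ) ^ (d * f) + 1 + 2 * b * (r : ℝ) ^ ((d * f : ℝ) - (f : ℝ) / 2)) :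
    (∑ f ∈ Finset.Icc 1 N, Φ f * Real.log ((r : ℝ) ^ (d * f) / ((r : ℝ) ^ (d * f) - 1))) -
        (∑ f ∈ Finset.Icc 1 N, Φ f * ∑ m ∈ Finset.Icc 1 (N / f), 1 / ((m : ℝ) * (r : ℝ) ^ (d * f * m))) ≤
      8 / ((N : ℝ) * (r : ℝ) ^ ((d * N : ℝ) / 2)) +
        12 * b * (r : ℝ) ^ (-(N : ℝ) / 4) / ((N : ℝ) * (r : ℝ) ^ ((d * N : ℝ) / 2)) :=
  stmt_13_general r d N hr hd b hb Φ h
end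

section
/- Let (aₙ)_{n≥1} be nonnegative reals with aₙ ≤ C·n for some constant C > 0, and for δ > 0 set g(δ) = ∑_{n=1}^{∞} aₙ · n^{−(1+δ)} (assuming convergence for all δ > 0). If the partial sums satisfy ∑_{n ≤ x} aₙ/n = log log x + B + ε(x) with ε(x) → 0 as x → ∞, then g(δ) + log δ → B − γ as δ → 0⁺, where γ is the Euler–Mascheroni constant. -/
/-!
Write `g(δ) = ∑ (aₙ / n) n^{-δ}` and `n^{-δ} = ∫_n^∞ δ t^{-1-δ} dt`; by Tonelli
`g(δ) = ∫_1^∞ F(t) δ t^{-1-δ} dt` with `F(t) = ∑_{n ≤ t} aₙ / n`. On `(2, ∞)` write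
`F(t) = log log t + B + E(t)` with `E → 0`. The weight `δ t^{-1-δ}` has mass `2^{-δ} → 1` on
`(2, ∞)` and its mass escapes to infinity as `δ → 0⁺`, so the contributions of `(1, 2]` and of
`E` vanish in the limit. The substitution `t = e^{u/δ}` turns the `log log` part into
`∫_{δ log 2}^∞ (log u - log δ) e^{-u} du`, which is `-γ - log δ + o(1)` because
`∫_0^∞ log u e^{-u} du = Γ'(1) = -γ`.
-/

open Filter MeasureTheory Set Real Topology

namespace MertensAbelian

lemma abs_log_le_two_mul_rpow_neg_half_add_self {t : ℝ} (ht : 0 < t) :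
    |log t| ≤ 2 * t ^ (-(1 / 2) : ℝ) + t := by
  have hpow : 0 < t ^ (-(1 / 2) : ℝ) := rpow_pos_of_pos ht _
  rcases le_or_gt 1 t with h | h
  · rw [abs_of_nonneg (log_nonneg h)]
    linarith [log_le_sub_one_of_pos ht]
  · rw [abs_of_nonpos (log_nonpos ht.le h.le)]
    have : -log t = 2 * log (t ^ (-(1 / 2) : ℝ)) := by rw [log_rpow ht]; ring
    linarith [log_le_sub_one_of_pos hpow]

lemma integrableOn_log_mul_exp_neg : IntegrableOn (fun t ↦ log t * exp (-t)) (Ioi 0) := by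
  have hdom : IntegrableOn
      (fun t ↦ 2 * (exp (-t) * t ^ ((1 / 2 : ℝ) - 1)) + exp (-t) * t ^ ((2 : ℝ) - 1)) (Ioi 0) :=
    ((GammaIntegral_convergent one_half_pos).const_mul 2).add (GammaIntegral_convergent two_pos)
  refine hdom.mono' (by fun_prop) ?_
  filter_upwards [ae_restrict_mem measurableSet_Ioi] with t (ht : 0 < t)
  rw [norm_mul, norm_eq_abs, norm_of_nonneg (exp_pos _).le]
  calc |log t| * exp (-t) ≤ (2 * t ^ (-(1 / 2) : ℝ) + t) * exp (-t) := by
        gcongr; exact abs_log_le_two_mul_rpow_neg_half_add_self ht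
    _ = _ := by norm_num; ring

lemma integral_log_mul_exp_neg :
    ∫ t in Ioi 0, log t * exp (-t) = -eulerMascheroniConstant := by
  have hGamma : Complex.GammaIntegral =ᶠ[𝓝 1] Complex.Gamma := by
    filter_upwards [(isOpen_lt continuous_const Complex.continuous_re).mem_nhds
      (show (0 : ℝ) < (1 : ℂ).re by norm_num)] with s hs
    exact (Complex.Gamma_eq_integral hs).symm
  have h := ((Complex.hasDerivAt_GammaIntegral (by norm_num)).congr_of_eventuallyEq
    hGamma.symm).unique Complex.hasDerivAt_Gamma_one
  have : ((∫ t in Ioi 0, log t * exp (-t) : ℝ) : ℂ) = -eulerMascheroniConstant := by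
    rw [← integral_complex_ofReal]; simpa using h
  exact_mod_cast this

lemma tendsto_setIntegral_Ioi_nhdsGT {f : ℝ → ℝ} {a : ℝ} (hf : IntegrableOn f (Ioi a)) :
    Tendsto (fun c ↦ ∫ t in Ioi c, f t) (𝓝[>] a) (𝓝 (∫ t in Ioi a, f t)) := by
  have hprim : ContinuousWithinAt (fun c ↦ ∫ t in a..c, f t) (Icc a (a + 1)) a := by
    refine intervalIntegral.continuousWithinAt_primitive (measure_singleton a) ?_
    simp only [min_self, max_eq_right (le_add_of_nonneg_right zero_le_one)]
    exact (intervalIntegrable_iff_integrableOn_Ioc_of_le (by linarith)).2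
      (hf.mono_set Ioc_subset_Ioi_self)
  have := (hprim.mono Ioo_subset_Icc_self).tendsto.const_sub (∫ t in Ioi a, f t)
  rw [intervalIntegral.integral_same, sub_zero, nhdsWithin_Ioo_eq_nhdsGT (by linarith)] at this
  refine this.congr' ?_
  filter_upwards [self_mem_nhdsWithin] with c (hc : a < c)
  rw [← intervalIntegral.integral_Ioi_sub_Ioi hf hc.le, sub_sub_cancel]

lemma tendsto_setIntegral_Ioi_mul_log_two_nhdsGT_zero :
    Tendsto (fun δ ↦ ∫ u in Ioi (δ * log 2), log u * exp (-u)) (𝓝[>] 0)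
      (𝓝 (-eulerMascheroniConstant)) := by
  have hmap : Tendsto (fun δ ↦ δ * log 2) (𝓝[>] 0) (𝓝[>] 0) := by
    refine tendsto_nhdsWithin_iff.2 ⟨?_, ?_⟩
    · have h : Continuous fun δ : ℝ ↦ δ * log 2 := by fun_prop
      simpa using (h.tendsto 0).mono_left nhdsWithin_le_nhds
    · filter_upwards [self_mem_nhdsWithin] with δ (hδ : 0 < δ)
      exact mul_pos hδ (log_pos one_lt_two)
  rw [← integral_log_mul_exp_neg]
  exact (tendsto_setIntegral_Ioi_nhdsGT integrableOn_log_mul_exp_neg).comp hmap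

lemma tendsto_two_rpow_neg_nhdsGT_zero : Tendsto (fun δ : ℝ ↦ (2 : ℝ) ^ (-δ)) (𝓝[>] 0) (𝓝 1) := by
  have h : Continuous fun δ : ℝ ↦ (2 : ℝ) ^ (-δ) :=
    (continuous_const_rpow two_ne_zero).comp continuous_neg
  simpa using (h.tendsto 0).mono_left nhdsWithin_le_nhds

lemma tendsto_log_mul_one_sub_two_rpow_neg_nhdsGT_zero :
    Tendsto (fun δ ↦ log δ * (1 - (2 : ℝ) ^ (-δ))) (𝓝[>] 0) (𝓝 0) := by
  have hbound : Tendsto (fun δ ↦ ‖δ * log δ‖ * log 2) (𝓝[>] 0) (𝓝 0) := by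
    have h : Continuous fun δ ↦ ‖δ * log δ‖ * log 2 := by fun_prop
    simpa using (h.tendsto 0).mono_left nhdsWithin_le_nhds
  refine squeeze_zero_norm' ?_ hbound
  filter_upwards [self_mem_nhdsWithin] with δ (hδ : 0 < δ)
  have hexp : (2 : ℝ) ^ (-δ) = exp (-(δ * log 2)) := by rw [rpow_def_of_pos two_pos]; ring_nf
  have hlo : 1 - δ * log 2 ≤ (2 : ℝ) ^ (-δ) := by linarith [hexp ▸ add_one_le_exp (-(δ * log 2))]
  have hhi : (2 : ℝ) ^ (-δ) ≤ 1 := rpow_le_one_of_one_le_of_nonpos one_le_two (by linarith)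
  rw [norm_mul, norm_mul, norm_of_nonneg (sub_nonneg.2 hhi), norm_of_nonneg hδ.le]
  have := mul_le_mul_of_nonneg_left (show 1 - (2 : ℝ) ^ (-δ) ≤ δ * log 2 by linarith)
    (norm_nonneg (log δ))
  linarith

noncomputable def weight (δ t : ℝ) : ℝ := δ * t ^ (-(1 + δ))

lemma weight_nonneg {δ t : ℝ} (hδ : 0 ≤ δ) (ht : 0 ≤ t) : 0 ≤ weight δ t :=
  mul_nonneg hδ (rpow_nonneg ht _)

lemma weight_le {δ t : ℝ} (hδ : 0 ≤ δ) (ht : 1 ≤ t) : weight δ t ≤ δ :=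
  mul_le_of_le_one_right hδ (rpow_le_one_of_one_le_of_nonpos ht (by linarith))

lemma continuousOn_weight (δ : ℝ) : ContinuousOn (weight δ) (Ioi 0) :=
  fun t ht ↦ (continuousAt_const.mul
    (continuousAt_rpow_const t _ (Or.inl (ne_of_gt ht)))).continuousWithinAt

lemma integrableOn_Ioi_weight {δ c : ℝ} (hδ : 0 < δ) (hc : 0 < c) :
    IntegrableOn (weight δ) (Ioi c) :=
  (integrableOn_Ioi_rpow_of_lt (by linarith) hc).const_mul δ

lemma integral_Ioi_weight {δ c : ℝ} (hδ : 0 < δ) (hc : 0 < c) :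
    ∫ t in Ioi c, weight δ t = c ^ (-δ) := by
  simp only [weight]
  rw [integral_const_mul, integral_Ioi_rpow_of_lt (by linarith) hc,
    show -(1 + δ) + 1 = -δ by ring]
  field_simp

lemma tsum_mul_rpow_neg_eq_integral {b : ℕ → ℝ} (hb : ∀ n, 0 ≤ b n) {δ : ℝ} (hδ : 0 < δ)
    (hsum : Summable fun n : ℕ ↦ b n * (n : ℝ) ^ (-δ)) :
    ∑' n : ℕ, b n * (n : ℝ) ^ (-δ) =
      ∫ t in Ioi 1, (∑ k ∈ Finset.Icc 1 ⌊t⌋₊, b k) * weight δ t := by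
  set G : ℕ → ℝ → ℝ := fun n t ↦ if n ∈ Finset.Icc 1 ⌊t⌋₊ then b n * weight δ t else 0
  have hG : ∀ n, IntegrableOn (G n) (Ici 1) ∧ ∫ t in Ici 1, G n t = b n * (n : ℝ) ^ (-δ) := by
    intro n
    rcases Nat.eq_zero_or_pos n with rfl | hn
    · simp [G, zero_rpow (neg_ne_zero.2 hδ.ne')]
    have hn1 : (1 : ℝ) ≤ n := by exact_mod_cast hn
    have hGn : EqOn (G n) ((Ici (n : ℝ)).indicator fun t ↦ b n * weight δ t) (Ici 1) :=
      fun t (ht : 1 ≤ t) ↦ by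
        simp only [G, Finset.mem_Icc, indicator, mem_Ici, Nat.le_floor_iff (by linarith : 0 ≤ t),
          show 1 ≤ n from hn, true_and]
    have hint : IntegrableOn (fun t ↦ b n * weight δ t) (Ici (n : ℝ)) :=
      (integrableOn_Ici_iff_integrableOn_Ioi).2
        ((integrableOn_Ioi_weight hδ (by linarith)).const_mul (b n))
    refine ⟨(hint.integrable_indicator measurableSet_Ici).integrableOn.congr_fun hGn.symm
      measurableSet_Ici, ?_⟩
    rw [setIntegral_congr_fun measurableSet_Ici hGn, setIntegral_indicator measurableSet_Ici,
      inter_eq_right.2 (Ici_subset_Ici.2 hn1), integral_Ici_eq_integral_Ioi, integral_const_mul,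
      integral_Ioi_weight hδ (by linarith)]
  have hG_norm : ∀ n, ∫ t in Ici 1, ‖G n t‖ = b n * (n : ℝ) ^ (-δ) := fun n ↦ by
    rw [← (hG n).2]
    refine setIntegral_congr_fun measurableSet_Ici fun t (ht : 1 ≤ t) ↦ norm_of_nonneg ?_
    simp only [G]
    split_ifs
    exacts [mul_nonneg (hb n) (weight_nonneg hδ.le (by linarith)), le_rfl]
  rw [← integral_Ici_eq_integral_Ioi]
  calc ∑' n : ℕ, b n * (n : ℝ) ^ (-δ) = ∑' n, ∫ t in Ici 1, G n t :=
        tsum_congr fun n ↦ (hG n).2.symm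
    _ = ∫ t in Ici 1, ∑' n, G n t := integral_tsum_of_summable_integral_norm (fun n ↦ (hG n).1)
          (hsum.congr fun n ↦ (hG_norm n).symm)
    _ = _ := by
      congr 1 with t
      rw [tsum_eq_sum fun n hn ↦ if_neg hn, Finset.sum_mul]
      exact Finset.sum_congr rfl fun n hn ↦ if_pos hn

lemma exp_smul_comp_exp_mul_weight (φ : ℝ → ℝ) {δ : ℝ} (hδ : δ ≠ 0) (s : ℝ) :
    exp s • (φ (log (exp s)) * weight δ (exp s)) = δ • (φ (δ * s / δ) * exp (-(δ * s))) := by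
  have : exp s * exp (s * -(1 + δ)) = exp (-(δ * s)) := by rw [← exp_add]; ring_nf
  rw [weight, log_exp, mul_div_cancel_left₀ _ hδ, ← exp_mul, smul_eq_mul, smul_eq_mul]
  linear_combination δ * φ s * this

lemma integral_Ioi_exp_comp_log_mul_weight (φ : ℝ → ℝ) (c : ℝ) {δ : ℝ} (hδ : 0 < δ) :
    ∫ t in Ioi (exp c), φ (log t) * weight δ t = ∫ u in Ioi (δ * c), φ (u / δ) * exp (-u) := by
  rw [← integral_comp_exp_Ioi, ← integral_comp_mul_left_Ioi' _ _ hδ, ← integral_smul]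
  simp_rw [exp_smul_comp_exp_mul_weight φ hδ.ne']

lemma integrableOn_Ioi_exp_comp_log_mul_weight_iff (φ : ℝ → ℝ) (c : ℝ) {δ : ℝ} (hδ : 0 < δ) :
    IntegrableOn (fun t ↦ φ (log t) * weight δ t) (Ioi (exp c)) ↔
      IntegrableOn (fun u ↦ φ (u / δ) * exp (-u)) (Ioi (δ * c)) := by
  rw [← integrableOn_comp_exp_Ioi, ← integrableOn_Ioi_comp_mul_left_iff _ _ hδ]
  simp_rw [exp_smul_comp_exp_mul_weight φ hδ.ne']
  exact integrable_smul_iff hδ.ne' _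

lemma integrableOn_Ioi_log_div_mul_exp_neg {δ c : ℝ} (hδ : 0 < δ) (hc : 0 ≤ c) :
    IntegrableOn (fun u ↦ log (u / δ) * exp (-u)) (Ioi c) := by
  have h := (integrableOn_log_mul_exp_neg.mono_set (Ioi_subset_Ioi hc)).sub
    ((integrableOn_exp_neg_Ioi c).const_mul (log δ))
  refine h.congr_fun (fun u (hu : c < u) ↦ ?_) measurableSet_Ioi
  rw [log_div (by linarith) hδ.ne', Pi.sub_apply]
  ring

lemma integrableOn_Ioi_two_log_log_mul_weight {δ : ℝ} (hδ : 0 < δ) :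
    IntegrableOn (fun t ↦ log (log t) * weight δ t) (Ioi 2) := by
  rw [← exp_log two_pos, integrableOn_Ioi_exp_comp_log_mul_weight_iff log _ hδ]
  exact integrableOn_Ioi_log_div_mul_exp_neg hδ (by positivity)

lemma integral_Ioi_two_log_log_mul_weight {δ : ℝ} (hδ : 0 < δ) :
    ∫ t in Ioi 2, log (log t) * weight δ t =
      (∫ u in Ioi (δ * log 2), log u * exp (-u)) - log δ * 2 ^ (-δ) := by
  have hc : 0 < δ * log 2 := by positivity
  rw [← exp_log two_pos, integral_Ioi_exp_comp_log_mul_weight log _ hδ, exp_log two_pos,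
    rpow_def_of_pos two_pos, show log 2 * -δ = -(δ * log 2) by ring, ← integral_exp_neg_Ioi,
    ← integral_const_mul, ← integral_sub
      (integrableOn_log_mul_exp_neg.mono_set (Ioi_subset_Ioi hc.le))
      ((integrableOn_exp_neg_Ioi _).const_mul _)]
  refine setIntegral_congr_fun measurableSet_Ioi fun u (hu : _ < u) ↦ ?_
  rw [log_div (by linarith) hδ.ne']
  ring

lemma integrableOn_Icc_mul_weight {f : ℝ → ℝ} {c M : ℝ} (hc : 0 < c) (δ : ℝ)
    (hf : IntegrableOn f (Icc c M)) : IntegrableOn (fun t ↦ f t * weight δ t) (Icc c M) :=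
  hf.mul_continuousOn ((continuousOn_weight δ).mono fun _ ht ↦ hc.trans_le ht.1) isCompact_Icc

lemma integrableOn_Ioi_mul_weight {f : ℝ → ℝ} {c δ : ℝ} (hc : 0 < c) (hδ : 0 < δ)
    (hf : LocallyIntegrableOn f (Ici c)) (hlim : Tendsto f atTop (𝓝 0)) :
    IntegrableOn (fun t ↦ f t * weight δ t) (Ioi c) := by
  obtain ⟨M, hM⟩ := Metric.tendsto_atTop.1 hlim 1 one_pos
  have hcM : c ≤ max c M := le_max_left c M
  rw [← Ioc_union_Ioi_eq_Ioi hcM, integrableOn_union]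
  constructor
  · exact (integrableOn_Icc_mul_weight hc δ (hf.integrableOn_compact_subset Icc_subset_Ici_self
      isCompact_Icc)).mono_set Ioc_subset_Icc_self
  · refine (integrableOn_Ioi_weight hδ (hc.trans_le hcM)).bdd_mul (c := 1)
      (hf.aestronglyMeasurable.mono_set fun t ht ↦ hcM.trans (le_of_lt ht)) ?_
    filter_upwards [ae_restrict_mem measurableSet_Ioi] with t (ht : max c M < t)
    simpa using (hM t ((le_max_right c M).trans ht.le)).le

lemma tendsto_setIntegral_mul_weight_nhdsGT_zero {f : ℝ → ℝ} {s : Set ℝ} (hs : s ⊆ Ici 1)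
    (hsm : MeasurableSet s) (hf : IntegrableOn f s) :
    Tendsto (fun δ ↦ ∫ t in s, f t * weight δ t) (𝓝[>] 0) (𝓝 0) := by
  have hbound : Tendsto (fun δ ↦ δ * ∫ t in s, ‖f t‖) (𝓝[>] 0) (𝓝 0) := by
    have h : Continuous fun δ ↦ δ * ∫ t in s, ‖f t‖ := by fun_prop
    simpa using (h.tendsto 0).mono_left nhdsWithin_le_nhds
  refine squeeze_zero_norm' ?_ hbound
  filter_upwards [self_mem_nhdsWithin] with δ (hδ : 0 < δ)
  rw [← integral_const_mul]
  refine norm_integral_le_of_norm_le (hf.norm.const_mul δ) ?_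
  filter_upwards [ae_restrict_mem hsm] with t ht
  have ht1 : (1 : ℝ) ≤ t := hs ht
  rw [norm_mul, norm_of_nonneg (weight_nonneg hδ.le (by linarith)), mul_comm]
  exact mul_le_mul_of_nonneg_right (weight_le hδ.le ht1) (norm_nonneg _)

lemma norm_setIntegral_Ioi_mul_weight_le {f : ℝ → ℝ} {M K δ : ℝ} (hM : 0 < M) (hδ : 0 < δ)
    (hK : ∀ t ∈ Ioi M, ‖f t‖ ≤ K) :
    ‖∫ t in Ioi M, f t * weight δ t‖ ≤ K * M ^ (-δ) := by
  rw [← integral_Ioi_weight hδ hM, ← integral_const_mul]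
  refine norm_integral_le_of_norm_le ((integrableOn_Ioi_weight hδ hM).const_mul K) ?_
  filter_upwards [ae_restrict_mem measurableSet_Ioi] with t (ht : M < t)
  have hw := weight_nonneg hδ.le (hM.trans ht).le
  rw [norm_mul, norm_of_nonneg hw]
  exact mul_le_mul_of_nonneg_right (hK t ht) hw

lemma tendsto_integral_Ioi_mul_weight_nhdsGT_zero {f : ℝ → ℝ} {c : ℝ} (hc : 1 ≤ c)
    (hf : LocallyIntegrableOn f (Ici c)) (hlim : Tendsto f atTop (𝓝 0)) :
    Tendsto (fun δ ↦ ∫ t in Ioi c, f t * weight δ t) (𝓝[>] 0) (𝓝 0) := by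
  rw [Metric.tendsto_nhds]
  intro η hη
  obtain ⟨M, hM⟩ := Metric.tendsto_atTop.1 hlim (η / 2) (half_pos hη)
  set M' := max c M
  have hcM : c ≤ M' := le_max_left c M
  have hhead := Metric.tendsto_nhds.1 (tendsto_setIntegral_mul_weight_nhdsGT_zero
    (fun t ht ↦ hc.trans ht.1.le) measurableSet_Ioc
    ((hf.integrableOn_compact_subset Icc_subset_Ici_self isCompact_Icc).mono_set
      (Ioc_subset_Icc_self (b := M')))) (η / 2) (half_pos hη)
  filter_upwards [self_mem_nhdsWithin, hhead] with δ (hδ : 0 < δ) hδhead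
  have hint := integrableOn_Ioi_mul_weight (by linarith) hδ hf hlim
  have htail := norm_setIntegral_Ioi_mul_weight_le (f := f) (K := η / 2) (by linarith) hδ
    fun t (ht : M' < t) ↦ by simpa using (hM t ((le_max_right c M).trans ht.le)).le
  rw [dist_zero_right] at hδhead ⊢
  rw [← intervalIntegral.integral_interval_add_Ioi hint (hint.mono_set (Ioi_subset_Ioi hcM)),
    intervalIntegral.integral_of_le hcM]
  calc _ ≤ _ := norm_add_le _ _
    _ < η / 2 + η / 2 * 1 := add_lt_add_of_lt_of_le hδhead (htail.trans (by
      gcongr; exact rpow_le_one_of_one_le_of_nonpos (by linarith) (by linarith)))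
    _ = η := by ring

lemma integral_Ioi_one_mul_weight_add_log_eq {F : ℝ → ℝ} (B : ℝ) {δ : ℝ} (hδ : 0 < δ)
    (hF : IntegrableOn (fun t ↦ F t * weight δ t) (Ioc 1 2))
    (hE : IntegrableOn (fun t ↦ (F t - log (log t) - B) * weight δ t) (Ioi 2)) :
    (∫ t in Ioi 1, F t * weight δ t) + log δ =
      (∫ t in Ioc 1 2, F t * weight δ t) + (∫ t in Ioi 2, (F t - log (log t) - B) * weight δ t) +
        B * 2 ^ (-δ) + (∫ u in Ioi (δ * log 2), log u * exp (-u)) + log δ * (1 - 2 ^ (-δ)) := by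
  have hLL := integrableOn_Ioi_two_log_log_mul_weight hδ
  have hB := (integrableOn_Ioi_weight hδ two_pos).const_mul B
  have hLB : IntegrableOn (fun t ↦ log (log t) * weight δ t + B * weight δ t) (Ioi 2) :=
    hLL.add hB
  have hsplit : ∫ t in Ioi 2, F t * weight δ t =
      (∫ t in Ioi 2, log (log t) * weight δ t) + (∫ t in Ioi 2, B * weight δ t) +
        ∫ t in Ioi 2, (F t - log (log t) - B) * weight δ t := by
    rw [← integral_add hLL hB, ← integral_add hLB hE]
    congr 1 with t
    ring
  have hF2 : IntegrableOn (fun t ↦ F t * weight δ t) (Ioi 2) :=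
    (hLB.add hE).congr_fun (fun t _ ↦ by simp only [Pi.add_apply]; ring) measurableSet_Ioi
  rw [← Ioc_union_Ioi_eq_Ioi one_le_two, setIntegral_union (Ioc_disjoint_Ioi le_rfl)
    measurableSet_Ioi hF hF2, hsplit, integral_const_mul, integral_Ioi_weight hδ two_pos,
    integral_Ioi_two_log_log_mul_weight hδ]
  ring

theorem tendsto_integral_mul_weight_add_log {F : ℝ → ℝ} {B : ℝ}
    (hF : LocallyIntegrableOn F (Ici 1))
    (hlim : Tendsto (fun t ↦ F t - log (log t) - B) atTop (𝓝 0)) :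
    Tendsto (fun δ ↦ (∫ t in Ioi 1, F t * weight δ t) + log δ) (𝓝[>] 0)
      (𝓝 (B - eulerMascheroniConstant)) := by
  have hloglog : ContinuousOn (fun t ↦ log (log t)) (Ici 2) :=
    (continuousOn_log.mono fun t (ht : 2 ≤ t) ↦ by grind).log fun t (ht : 2 ≤ t) ↦
      (log_pos (by linarith)).ne'
  have hE : LocallyIntegrableOn (fun t ↦ F t - log (log t) - B) (Ici 2) :=
    ((hF.mono_set (Ici_subset_Ici.2 one_le_two)).sub
      (hloglog.locallyIntegrableOn measurableSet_Ici)).sub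
      (continuousOn_const.locallyIntegrableOn measurableSet_Ici)
  have hF12 : IntegrableOn F (Icc 1 2) :=
    hF.integrableOn_compact_subset Icc_subset_Ici_self isCompact_Icc
  have hlimit := ((((tendsto_setIntegral_mul_weight_nhdsGT_zero (fun t ht ↦ ht.1.le)
    measurableSet_Ioc (hF12.mono_set Ioc_subset_Icc_self)).add
    (tendsto_integral_Ioi_mul_weight_nhdsGT_zero one_le_two hE hlim)).add
    (tendsto_two_rpow_neg_nhdsGT_zero.const_mul B)).add
    tendsto_setIntegral_Ioi_mul_log_two_nhdsGT_zero).add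
    tendsto_log_mul_one_sub_two_rpow_neg_nhdsGT_zero
  rw [show (0 : ℝ) + 0 + B * 1 + -eulerMascheroniConstant + 0 = B - eulerMascheroniConstant by
    ring] at hlimit
  refine hlimit.congr' ?_
  filter_upwards [self_mem_nhdsWithin] with δ (hδ : 0 < δ)
  exact (integral_Ioi_one_mul_weight_add_log_eq B hδ
    ((integrableOn_Icc_mul_weight one_pos δ hF12).mono_set Ioc_subset_Icc_self)
    (integrableOn_Ioi_mul_weight two_pos hδ hE hlim)).symm

lemma mul_rpow_neg_one_add_eq_div_mul (x : ℝ) (n : ℕ) {δ : ℝ} (hδ : 0 < δ) :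
    x * (n : ℝ) ^ (-(1 + δ)) = x / n * (n : ℝ) ^ (-δ) := by
  rcases Nat.eq_zero_or_pos n with rfl | hn
  · rw [Nat.cast_zero, zero_rpow (by linarith : -(1 + δ) < 0).ne, div_zero, zero_mul, mul_zero]
  · rw [neg_add, rpow_add (by exact_mod_cast hn), rpow_neg_one]
    ring

end MertensAbelian

open MertensAbelian

open Filter in
theorem stmt_14_general (a : ℕ → ℝ) (ha : ∀ n, 0 ≤ a n)
    (hsum : ∀ δ : ℝ, 0 < δ → Summable (fun n : ℕ => a n * (n : ℝ) ^ (-(1 + δ))))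
    (B : ℝ) (ε : ℝ → ℝ) (hε : Tendsto ε atTop (nhds 0))
    (hpartial : ∀ x : ℝ, 2 ≤ x →
      (∑ n ∈ Finset.Icc 1 ⌊x⌋₊, a n / n) = Real.log (Real.log x) + B + ε x) :
    Tendsto (fun δ : ℝ => (∑' n : ℕ, a n * (n : ℝ) ^ (-(1 + δ))) + Real.log δ)
      (nhdsWithin 0 (Set.Ioi 0)) (nhds (B - Real.eulerMascheroniConstant)) := by
  set F : ℝ → ℝ := fun t ↦ ∑ n ∈ Finset.Icc 1 ⌊t⌋₊, a n / n
  have hb : ∀ n, 0 ≤ a n / n := fun n ↦ div_nonneg (ha n) n.cast_nonneg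
  have hF : Monotone F := fun s t hst ↦ Finset.sum_le_sum_of_subset_of_nonneg
    (Finset.Icc_subset_Icc_right (Nat.floor_mono hst)) fun n _ _ ↦ hb n
  have hlim : Tendsto (fun t ↦ F t - log (log t) - B) atTop (𝓝 0) := by
    refine hε.congr' ?_
    filter_upwards [eventually_ge_atTop 2] with t ht
    simp only [F, hpartial t ht]
    ring
  refine (tendsto_integral_mul_weight_add_log (hF.locallyIntegrable.locallyIntegrableOn _)
    hlim).congr' ?_
  filter_upwards [self_mem_nhdsWithin] with δ (hδ : 0 < δ)
  simp_rw [mul_rpow_neg_one_add_eq_div_mul _ _ hδ]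
  rw [tsum_mul_rpow_neg_eq_integral hb hδ
    ((hsum δ hδ).congr fun n ↦ mul_rpow_neg_one_add_eq_div_mul _ _ hδ)]

open Filter in
theorem stmt_14 (a : ℕ → ℝ) (C : ℝ) (hC : 0 < C) (ha : ∀ n, 0 ≤ a n)
    (haC : ∀ n, a n ≤ C * n)
    (hsum : ∀ δ : ℝ, 0 < δ → Summable (fun n : ℕ => a n * (n : ℝ) ^ (-(1 + δ))))
    (B : ℝ) (ε : ℝ → ℝ) (hε : Tendsto ε atTop (nhds 0))
    (hpartial : ∀ x : ℝ, 2 ≤ x →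
      (∑ n ∈ Finset.Icc 1 ⌊x⌋₊, a n / n) = Real.log (Real.log x) + B + ε x) :
    Tendsto (fun δ : ℝ => (∑' n : ℕ, a n * (n : ℝ) ^ (-(1 + δ))) + Real.log δ)
      (nhdsWithin 0 (Set.Ioi 0)) (nhds (B - Real.eulerMascheroniConstant)) :=
  stmt_14_general a ha hsum B ε hε hpartial
end

section
/- Let ρ ∈ (0,1), c₄ > 0 and x ≥ 2, and suppose Δ₁(t) = Li(t^ρ) ≤ c₄·t^ρ/(ρ log t) for all t ≥ x. Then |Δ₁(x)/x − ∫_x^∞ Δ₁(t)·t^{−2} dt| ≤ (c₄/(ρ·log x))·(1 + 1/(1−ρ)). -/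
/-!
Writing `F(t) = ∫₂^{t^ρ} ds / log s`, the quantity inside the absolute value equals
`-∫ₓ^∞ (F(t) - F(x)) t⁻² dt`, since `∫ₓ^∞ t⁻² dt = 1/x`. For `t ≥ x` the increment
`F(t) - F(x) = ∫_{x^ρ}^{t^ρ} ds / log s` lies between `0` and `t^ρ / (ρ log x)`, so the tail
integral lies between `0` and `x^(ρ-1) / ((1-ρ) ρ log x) ≤ 1 / ((1-ρ) ρ log x)`. This is at most the stated
bound because the hypothesis forces `c₄ ≥ 1`, as `∫₂^y ds / log s ∼ y / log y`.
-/

open MeasureTheory Set Filter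

section LogIntegral

lemma intervalIntegrable_one_div_log {a b : ℝ} (ha : 1 < a) (hb : 1 < b) :
    IntervalIntegrable (fun s => 1 / Real.log s) volume a b := by
  refine ContinuousOn.intervalIntegrable fun s hs => ?_
  have hs : 1 < s := (lt_min ha hb).trans_le hs.1
  exact (continuousAt_const.div (Real.continuousAt_log (by linarith))
    (Real.log_pos hs).ne').continuousWithinAt

lemma integral_one_div_log_le {a b : ℝ} (ha : 1 < a) (hab : a ≤ b) :
    ∫ s in a..b, 1 / Real.log s ≤ (b - a) / Real.log a := by
  have h := intervalIntegral.integral_mono_on (g := fun _ => 1 / Real.log a) hab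
    (intervalIntegrable_one_div_log ha (ha.trans_le hab)) intervalIntegrable_const
    fun s hs => one_div_le_one_div_of_le (Real.log_pos ha) (Real.log_le_log (by linarith) hs.1)
  simpa [div_eq_mul_inv] using h

lemma div_log_le_integral_one_div_log {a b : ℝ} (ha : 1 < a) (hab : a ≤ b) :
    (b - a) / Real.log b ≤ ∫ s in a..b, 1 / Real.log s := by
  have h := intervalIntegral.integral_mono_on (f := fun _ => 1 / Real.log b) hab
    intervalIntegrable_const (intervalIntegrable_one_div_log ha (ha.trans_le hab))
    fun s hs => one_div_le_one_div_of_le (Real.log_pos (ha.trans_le hs.1))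
      (Real.log_le_log (by linarith [hs.1]) hs.2)
  simpa [div_eq_mul_inv] using h

lemma integral_one_div_log_nonneg {a b : ℝ} (ha : 1 < a) (hab : a ≤ b) :
    0 ≤ ∫ s in a..b, 1 / Real.log s :=
  (div_nonneg (sub_nonneg.2 hab) (Real.log_pos (ha.trans_le hab)).le).trans
    (div_log_le_integral_one_div_log ha hab)

/-- The upper bound `∫₂^y ds / log s ≤ c y / log y` forces `c ≥ 1`: compare with
`∫ᵤ^{u²} ds / log s ≥ (u² - u) / (2 log u)`. -/
lemma one_le_of_integral_one_div_log_le {c Y : ℝ}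
    (h : ∀ y, Y ≤ y → ∫ s in (2 : ℝ)..y, 1 / Real.log s ≤ c * y / Real.log y) : 1 ≤ c := by
  have hev : ∀ᶠ u : ℝ in atTop, 1 - u⁻¹ ≤ c := by
    filter_upwards [eventually_ge_atTop 2, eventually_ge_atTop Y] with u hu2 huY
    have hu1 : 1 < u := by linarith
    have hlog : 0 < 2 * Real.log u := by have := Real.log_pos hu1; positivity
    have hlog_sq : Real.log (u ^ 2) = 2 * Real.log u := by simp [Real.log_pow]
    have hu_sq : u ≤ u ^ 2 := by nlinarith
    have key : (u ^ 2 - u) / (2 * Real.log u) ≤ c * u ^ 2 / (2 * Real.log u) := calc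
      (u ^ 2 - u) / (2 * Real.log u) ≤ ∫ s in u..u ^ 2, 1 / Real.log s := by
        rw [← hlog_sq]; exact div_log_le_integral_one_div_log hu1 hu_sq
      _ ≤ ∫ s in (2 : ℝ)..u ^ 2, 1 / Real.log s := by
        rw [← intervalIntegral.integral_interval_sub_left
          (intervalIntegrable_one_div_log one_lt_two (hu1.trans_le hu_sq))
          (intervalIntegrable_one_div_log one_lt_two hu1)]
        linarith [integral_one_div_log_nonneg one_lt_two hu2]
      _ ≤ c * u ^ 2 / (2 * Real.log u) := hlog_sq ▸ h _ (huY.trans hu_sq)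
    rw [div_le_div_iff_of_pos_right hlog] at key
    rw [sub_le_iff_le_add, ← sub_le_iff_le_add', inv_eq_one_div, le_div_iff₀ (by linarith)]
    nlinarith
  exact le_of_tendsto (by simpa using tendsto_inv_atTop_zero.const_sub (1 : ℝ)) hev

lemma one_le_of_integral_one_div_log_rpow_le {ρ c x : ℝ} (hρ : 0 < ρ) (hx : 0 ≤ x)
    (h : ∀ t, x ≤ t → ∫ s in (2 : ℝ)..t ^ ρ, 1 / Real.log s ≤ c * t ^ ρ / (ρ * Real.log t)) :
    1 ≤ c := by
  refine one_le_of_integral_one_div_log_le (Y := max (x ^ ρ) 1) fun y hy => ?_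
  have hy0 : 0 < y := zero_lt_one.trans_le (le_of_max_le_right hy)
  have hxy : x ≤ y ^ ρ⁻¹ := (Real.le_rpow_inv_iff_of_pos hx hy0.le hρ).2 (le_of_max_le_left hy)
  have hlog : ρ * Real.log (y ^ ρ⁻¹) = Real.log y := by
    rw [Real.log_rpow hy0]; field_simp
  simpa only [Real.rpow_inv_rpow hy0.le hρ.ne', hlog] using h _ hxy

variable {ρ x t : ℝ}

lemma integral_one_div_log_rpow_sub (hρ : 0 < ρ) (hx : 1 < x) (hxt : x ≤ t) :
    (∫ s in (2 : ℝ)..t ^ ρ, 1 / Real.log s) - ∫ s in (2 : ℝ)..x ^ ρ, 1 / Real.log s =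
      ∫ s in x ^ ρ..t ^ ρ, 1 / Real.log s :=
  intervalIntegral.integral_interval_sub_left
    (intervalIntegrable_one_div_log one_lt_two (Real.one_lt_rpow (hx.trans_le hxt) hρ))
    (intervalIntegrable_one_div_log one_lt_two (Real.one_lt_rpow hx hρ))

lemma monotoneOn_integral_one_div_log_rpow (hρ : 0 < ρ) (hx : 1 < x) :
    MonotoneOn (fun t => ∫ s in (2 : ℝ)..t ^ ρ, 1 / Real.log s) (Ici x) := by
  intro t ht t' _ htt'
  have ht : 1 < t := hx.trans_le ht
  have h := integral_one_div_log_rpow_sub hρ ht htt'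
  linarith [integral_one_div_log_nonneg (Real.one_lt_rpow ht hρ)
    (Real.rpow_le_rpow (by linarith) htt' hρ.le)]

lemma integral_one_div_log_rpow_sub_le (hρ : 0 < ρ) (hx : 1 < x) (hxt : x ≤ t) :
    (∫ s in (2 : ℝ)..t ^ ρ, 1 / Real.log s) - ∫ s in (2 : ℝ)..x ^ ρ, 1 / Real.log s ≤
      (ρ * Real.log x)⁻¹ * t ^ ρ := by
  have hx0 : 0 < x := by linarith
  have hL : 0 < ρ * Real.log x := mul_pos hρ (Real.log_pos hx)
  rw [integral_one_div_log_rpow_sub hρ hx hxt]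
  calc ∫ s in x ^ ρ..t ^ ρ, 1 / Real.log s ≤ (t ^ ρ - x ^ ρ) / (ρ * Real.log x) := by
        rw [← Real.log_rpow hx0]
        exact integral_one_div_log_le (Real.one_lt_rpow hx hρ) (Real.rpow_le_rpow hx0.le hxt hρ.le)
    _ ≤ (ρ * Real.log x)⁻¹ * t ^ ρ := by
        rw [div_eq_inv_mul]
        gcongr
        linarith [Real.rpow_nonneg hx0.le ρ]

end LogIntegral

section TailIntegral

variable {f : ℝ → ℝ} {x K ρ : ℝ}

lemma sub_mul_rpow_neg_two_le (hx : 0 < x) (hK : ∀ t, x ≤ t → f t - f x ≤ K * t ^ ρ)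
    {t : ℝ} (hxt : x ≤ t) : (f t - f x) * t ^ (-2 : ℝ) ≤ K * t ^ (ρ - 2) := by
  have ht : 0 < t := hx.trans_le hxt
  calc (f t - f x) * t ^ (-2 : ℝ) ≤ K * t ^ ρ * t ^ (-2 : ℝ) := by
        gcongr
        exact hK t hxt
    _ = K * t ^ (ρ - 2) := by rw [sub_eq_add_neg, Real.rpow_add ht, mul_assoc]

lemma sub_mul_rpow_neg_two_nonneg (hx : 0 < x) (hf : MonotoneOn f (Ici x)) {t : ℝ}
    (hxt : x ≤ t) : 0 ≤ (f t - f x) * t ^ (-2 : ℝ) :=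
  mul_nonneg (sub_nonneg.2 (hf self_mem_Ici hxt hxt)) (Real.rpow_nonneg (hx.le.trans hxt) _)

lemma integrableOn_Ioi_sub_mul_rpow_neg_two (hx : 0 < x) (hρ : ρ < 1)
    (hf : MonotoneOn f (Ici x)) (hK : ∀ t, x ≤ t → f t - f x ≤ K * t ^ ρ) :
    IntegrableOn (fun t => (f t - f x) * t ^ (-2 : ℝ)) (Ioi x) := by
  have hdom := (integrableOn_Ioi_rpow_of_lt (a := ρ - 2) (by linarith) hx).const_mul K
  refine Integrable.mono' hdom ?_ ?_
  · exact (((aemeasurable_restrict_of_monotoneOn measurableSet_Ioi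
      (hf.mono Ioi_subset_Ici_self)).sub_const _).mul (by fun_prop)).aestronglyMeasurable
  · filter_upwards [ae_restrict_mem measurableSet_Ioi] with t ht
    rw [Real.norm_eq_abs, abs_of_nonneg (sub_mul_rpow_neg_two_nonneg hx hf ht.le)]
    exact sub_mul_rpow_neg_two_le hx hK ht.le

lemma setIntegral_Ioi_mul_rpow_neg_two_sub_div (hx : 0 < x)
    (hint : IntegrableOn (fun t => (f t - f x) * t ^ (-2 : ℝ)) (Ioi x)) :
    (∫ t in Ioi x, f t * t ^ (-2 : ℝ)) - f x / x = ∫ t in Ioi x, (f t - f x) * t ^ (-2 : ℝ) := by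
  have hint2 := integrableOn_Ioi_rpow_of_lt (by norm_num : (-2 : ℝ) < -1) hx
  have hI2 : ∫ t in Ioi x, t ^ (-2 : ℝ) = x⁻¹ := by
    rw [integral_Ioi_rpow_of_lt (by norm_num) hx]; norm_num [Real.rpow_neg_one]
  calc (∫ t in Ioi x, f t * t ^ (-2 : ℝ)) - f x / x
      = (∫ t in Ioi x, ((f t - f x) * t ^ (-2 : ℝ) + f x * t ^ (-2 : ℝ))) - f x / x := by
        simp only [sub_mul, sub_add_cancel]
    _ = ∫ t in Ioi x, (f t - f x) * t ^ (-2 : ℝ) := by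
        rw [integral_add hint (hint2.const_mul _), integral_const_mul, hI2, div_eq_mul_inv,
          add_sub_cancel_right]

theorem setIntegral_Ioi_mul_rpow_neg_two_sub_div_mem_Icc (hx : 0 < x) (hρ : ρ < 1)
    (hf : MonotoneOn f (Ici x)) (hK : ∀ t, x ≤ t → f t - f x ≤ K * t ^ ρ) :
    (∫ t in Ioi x, f t * t ^ (-2 : ℝ)) - f x / x ∈ Icc 0 (K * x ^ (ρ - 1) / (1 - ρ)) := by
  have hint := integrableOn_Ioi_sub_mul_rpow_neg_two hx hρ hf hK
  rw [setIntegral_Ioi_mul_rpow_neg_two_sub_div hx hint]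
  refine ⟨setIntegral_nonneg measurableSet_Ioi fun t ht => sub_mul_rpow_neg_two_nonneg hx hf
    (mem_Ioi.1 ht).le, ?_⟩
  calc ∫ t in Ioi x, (f t - f x) * t ^ (-2 : ℝ) ≤ ∫ t in Ioi x, K * t ^ (ρ - 2) :=
        setIntegral_mono_on hint
          ((integrableOn_Ioi_rpow_of_lt (a := ρ - 2) (by linarith) hx).const_mul K)
          measurableSet_Ioi
          fun t ht => sub_mul_rpow_neg_two_le hx hK (mem_Ioi.1 ht).le
    _ = K * x ^ (ρ - 1) / (1 - ρ) := by
        rw [integral_const_mul, integral_Ioi_rpow_of_lt (by linarith) hx,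
          show ρ - 2 + 1 = ρ - 1 by ring, neg_div, ← div_neg, neg_sub, mul_div_assoc]

end TailIntegral

open MeasureTheory in
theorem stmt_16_general (ρ c₄ x : ℝ) (hρ0 : 0 < ρ) (hρ1 : ρ < 1) (hx : 2 ≤ x)
    (Δ₁ : ℝ → ℝ) (hΔ : ∀ t, Δ₁ t = ∫ s in (2 : ℝ)..(t ^ ρ), 1 / Real.log s)
    (hbound : ∀ t, x ≤ t → Δ₁ t ≤ c₄ * t ^ ρ / (ρ * Real.log t)) :
    |Δ₁ x / x - ∫ t in Set.Ioi x, Δ₁ t * t ^ (-(2 : ℝ))| ≤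
      c₄ / (ρ * Real.log x) * (1 + 1 / (1 - ρ)) := by
  have hx1 : 1 < x := by linarith
  have hc₄ : 1 ≤ c₄ :=
    one_le_of_integral_one_div_log_rpow_le hρ0 (by linarith) fun t ht => hΔ t ▸ hbound t ht
  obtain rfl : Δ₁ = fun t => ∫ s in (2 : ℝ)..t ^ ρ, 1 / Real.log s := funext hΔ
  obtain ⟨hlow, hupp⟩ := setIntegral_Ioi_mul_rpow_neg_two_sub_div_mem_Icc (by linarith) hρ1
    (monotoneOn_integral_one_div_log_rpow hρ0 hx1)
    fun t ht => integral_one_div_log_rpow_sub_le hρ0 hx1 ht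
  have hL : 0 < (ρ * Real.log x)⁻¹ := inv_pos.2 (mul_pos hρ0 (Real.log_pos hx1))
  have h1ρ : 0 < (1 - ρ)⁻¹ := inv_pos.2 (by linarith)
  have hxρ : x ^ (ρ - 1) ≤ 1 := Real.rpow_le_one_of_one_le_of_nonpos hx1.le (by linarith)
  rw [abs_sub_comm, abs_of_nonneg hlow]
  calc _ ≤ (ρ * Real.log x)⁻¹ * x ^ (ρ - 1) / (1 - ρ) := hupp
    _ ≤ (ρ * Real.log x)⁻¹ * 1 / (1 - ρ) := by gcongr
    _ ≤ c₄ / (ρ * Real.log x) * (1 + 1 / (1 - ρ)) := by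
        simp only [div_eq_mul_inv, one_mul, mul_one]
        nlinarith [mul_pos hL h1ρ]

open MeasureTheory in
theorem stmt_16 (ρ c₄ x : ℝ) (hρ0 : 0 < ρ) (hρ1 : ρ < 1) (hc : 0 < c₄) (hx : 2 ≤ x)
    (Δ₁ : ℝ → ℝ) (hΔ : ∀ t, Δ₁ t = ∫ s in (2 : ℝ)..(t ^ ρ), 1 / Real.log s)
    (hbound : ∀ t, x ≤ t → Δ₁ t ≤ c₄ * t ^ ρ / (ρ * Real.log t)) :
    |Δ₁ x / x - ∫ t in Set.Ioi x, Δ₁ t * t ^ (-(2 : ℝ))| ≤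
      c₄ / (ρ * Real.log x) * (1 + 1 / (1 - ρ)) :=
  stmt_16_general ρ c₄ x hρ0 hρ1 hx Δ₁ hΔ hbound
end

section
/- Let r ≥ 2 be an integer and let f : ℕ → ℕ satisfy f(b) → ∞ and f(b)/b → 0 as b → ∞. Let Φ_{r^m}(b) ≥ 0 satisfy m·Φ_{r^m}(b) ≤ r^{dm} + 1 + 2b·r^{dm−m/2} and Φ_{r^m}(b)/b → φ_{r^m} for each m. Then ∑_{m=1}^{∞} φ_{r^m}·log(r^{dm}/(r^{dm}−1)) converges and (1/b)·∑_{m=1}^{f(b)} Φ_{r^m}(b)·log(r^{dm}/(r^{dm}−1)) → ∑_{m=1}^{∞} φ_{r^m}·log(r^{dm}/(r^{dm}−1)) as b → ∞. -/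
/-! With `L m = log (r^(dm) / (r^(dm) - 1)) ≤ 2 r^(-dm)`, the hypothesis gives
`0 ≤ a_b(m) := Φ_{r^m}(b) / b · L m ≤ 3 / b + 4 r^(-m/2)` for `m ≥ 1`. Split
`a_b(m) = min (a_b(m), 4 r^(-m/2)) + excess`: the first parts converge termwise and are
dominated by a geometric series, so Tannery's theorem applies, while each excess is at most
`3 / b`, so the excesses for `m ≤ f b` add up to at most `3 f(b) / b → 0`. -/

open Filter Topology Finset Real

theorem summable_and_tendsto_sum_range_of_le_div_add
    {a : ℕ → ℕ → ℝ} {g D : ℕ → ℝ} {C : ℝ} {f : ℕ → ℕ}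
    (hf : Tendsto f atTop atTop) (hf_div : Tendsto (fun b => (f b : ℝ) / b) atTop (𝓝 0))
    (hD : Summable D) (hD0 : ∀ m, 0 ≤ D m) (ha0 : ∀ b m, 0 ≤ a b m)
    (haD : ∀ᶠ b in atTop, ∀ m, a b m ≤ C / b + D m)
    (hag : ∀ m, Tendsto (fun b => a b m) atTop (𝓝 (g m))) :
    Summable g ∧ Tendsto (fun b => ∑ m ∈ range (f b), a b m) atTop (𝓝 (∑' m, g m)) := by
  have hgD (m : ℕ) : g m ≤ D m := by
    have hlim := (tendsto_const_div_atTop_nhds_zero_nat C).add_const (D m)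
    rw [zero_add] at hlim
    exact le_of_tendsto_of_tendsto (hag m) hlim (haD.mono fun b h => h m)
  have hg0 (m : ℕ) : 0 ≤ g m := ge_of_tendsto' (hag m) (ha0 · m)
  refine ⟨hD.of_nonneg_of_le hg0 hgD, ?_⟩
  have hsplit (b m : ℕ) : a b m = min (a b m) (D m) + max (a b m - D m) 0 := by
    rcases le_total (a b m) (D m) with h | h
    · rw [min_eq_left h, max_eq_right (by linarith)]; ring
    · rw [min_eq_right h, max_eq_left (by linarith)]; ring
  have hmain : Tendsto (fun b => ∑ m ∈ range (f b), min (a b m) (D m)) atTop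
      (𝓝 (∑' m, g m)) := by
    refine (tendsto_tsum_of_dominated_convergence hD (fun m => ?_) (Eventually.of_forall
      fun b m => ?_)).congr fun b => (sum_eq_tsum_indicator _ _).symm
    · have hmem : ∀ᶠ b in atTop, m ∈ range (f b) :=
        (tendsto_atTop.mp hf (m + 1)).mono fun b hb => mem_range.mpr hb
      rw [← min_eq_left (hgD m)]
      refine ((hag m).min tendsto_const_nhds).congr' (hmem.mono fun b hb => ?_)
      exact (Set.indicator_of_mem (mem_coe.mpr hb) fun m => min (a b m) (D m)).symm
    · refine (norm_indicator_le_norm_self _ m).trans ?_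
      rw [Real.norm_of_nonneg (le_min (ha0 b m) (hD0 m))]
      exact min_le_right _ _
  have hexcess : Tendsto (fun b => ∑ m ∈ range (f b), max (a b m - D m) 0) atTop (𝓝 0) := by
    have hupper := hf_div.const_mul |C|
    rw [mul_zero] at hupper
    refine tendsto_of_tendsto_of_tendsto_of_le_of_le' tendsto_const_nhds hupper
      (Eventually.of_forall fun b => sum_nonneg fun m _ => le_max_right _ _)
      (haD.mono fun b hb => ?_)
    calc ∑ m ∈ range (f b), max (a b m - D m) 0 ≤ (range (f b)).card • (|C| / b) :=
          sum_le_card_nsmul _ _ _ fun m _ => max_le (by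
            linarith [hb m, div_le_div_of_nonneg_right (le_abs_self C) (b.cast_nonneg (α := ℝ))])
            (by positivity)
      _ = |C| * (f b / b) := by rw [card_range, nsmul_eq_mul]; ring
  simpa only [← sum_add_distrib, ← hsplit, add_zero] using hmain.add hexcess

theorem log_div_sub_one_nonneg {x : ℝ} (hx : 1 < x) : 0 ≤ log (x / (x - 1)) :=
  log_nonneg <| (one_le_div (by linarith)).mpr (by linarith)

theorem log_div_sub_one_le_two_div {x : ℝ} (hx : 2 ≤ x) : log (x / (x - 1)) ≤ 2 / x := by
  have hx1 : x - 1 ≠ 0 := by linarith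
  calc log (x / (x - 1)) ≤ x / (x - 1) - 1 :=
        log_le_sub_one_of_pos (div_pos (by linarith) (by linarith))
    _ = 1 / (x - 1) := by field_simp; ring
    _ ≤ 2 / x := by rw [div_le_div_iff₀ (by linarith) (by linarith)]; linarith

theorem div_mul_log_div_sub_one_le {x y b t : ℝ} (hx : 2 ≤ x) (hb : 0 < b) (ht : 0 ≤ t)
    (hy : y ≤ x + 1 + 2 * b * (x * t)) :
    y / b * log (x / (x - 1)) ≤ 3 / b + 4 * t := by
  have hx0 : 0 < x := by linarith
  calc y / b * log (x / (x - 1)) ≤ (x + 1 + 2 * b * (x * t)) / b * (2 / x) :=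
        mul_le_mul (by gcongr) (log_div_sub_one_le_two_div hx)
          (log_div_sub_one_nonneg (by linarith)) (by positivity)
    _ = 2 / b + 2 / (x * b) + 4 * t := by field_simp; ring
    _ ≤ 2 / b + 1 / b + 4 * t := by
        have : 2 / (x * b) ≤ 1 / b := by
          rw [div_le_div_iff₀ (by positivity) hb]
          nlinarith
        linarith
    _ = 3 / b + 4 * t := by ring

theorem rpow_sub_natCast_div_two {c : ℝ} (hc : 0 < c) (x : ℝ) (m : ℕ) :
    c ^ (x - (m : ℝ) / 2) = c ^ x * (c ^ (-(1 / 2 : ℝ))) ^ m := by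
  rw [← rpow_natCast, ← rpow_mul hc.le, sub_eq_add_neg, rpow_add hc]
  ring_nf

theorem div_mul_log_le_of_mul_le {r y b : ℝ} {d m : ℕ} (hr : 2 ≤ r) (hd : 1 ≤ d)
    (hm : 1 ≤ m) (hb : 0 < b) (hy0 : 0 ≤ y)
    (hy : m * y ≤ r ^ (d * m) + 1 + 2 * b * r ^ ((d * m : ℝ) - (m : ℝ) / 2)) :
    y / b * log (r ^ (d * m) / (r ^ (d * m) - 1)) ≤ 3 / b + 4 * (r ^ (-(1 / 2 : ℝ))) ^ m := by
  have htwo : 2 ≤ r ^ (d * m) :=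
    hr.trans (le_self_pow₀ (by linarith) (mul_ne_zero (by omega) (by omega)))
  rw [rpow_sub_natCast_div_two (by positivity), ← Nat.cast_mul, rpow_natCast] at hy
  exact div_mul_log_div_sub_one_le htwo hb (by positivity)
    ((le_mul_of_one_le_left hy0 (by exact_mod_cast hm)).trans hy)

open Filter in
theorem stmt_18 (r d : ℕ) (hr : 2 ≤ r) (hd : 1 ≤ d)
    (f : ℕ → ℕ) (hf1 : Tendsto f atTop atTop)
    (hf2 : Tendsto (fun b => (f b : ℝ) / b) atTop (nhds 0))
    (Φ : ℕ → ℕ → ℝ) (hΦ : ∀ b m, 0 ≤ Φ b m)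
    (hbound : ∀ b m : ℕ, 1 ≤ m → (m : ℝ) * Φ b m ≤
        (r : ℝ) ^ (d * m) + 1 + 2 * (b : ℝ) * (r : ℝ) ^ ((d * m : ℝ) - (m : ℝ) / 2))
    (φ : ℕ → ℝ) (hconv : ∀ m, Tendsto (fun b => Φ b m / b) atTop (nhds (φ m))) :
    Summable (fun m : ℕ => φ m * Real.log ((r : ℝ) ^ (d * m) / ((r : ℝ) ^ (d * m) - 1))) ∧
    Tendsto (fun b : ℕ => (1 / (b : ℝ)) * ∑ m ∈ Finset.Icc 1 (f b),
        Φ b m * Real.log ((r : ℝ) ^ (d * m) / ((r : ℝ) ^ (d * m) - 1))) atTop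
      (nhds (∑' m : ℕ, φ m * Real.log ((r : ℝ) ^ (d * m) / ((r : ℝ) ^ (d * m) - 1)))) := by
  set L : ℕ → ℝ := fun m => log ((r : ℝ) ^ (d * m) / ((r : ℝ) ^ (d * m) - 1)) with hL
  set ρ : ℝ := (r : ℝ) ^ (-(1 / 2 : ℝ))
  have hr1 : (1 : ℝ) < r := by exact_mod_cast hr
  have hρ0 : 0 ≤ ρ := by positivity
  have hρ1 : ρ < 1 := rpow_lt_one_of_one_lt_of_neg hr1 (by norm_num)
  obtain ⟨hsum, hlim⟩ := summable_and_tendsto_sum_range_of_le_div_add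
    (a := fun b m => Φ b (m + 1) / b * L (m + 1)) (g := fun m => φ (m + 1) * L (m + 1))
    (D := fun m => 4 * ρ ^ (m + 1)) (C := 3) hf1 hf2
    ((summable_nat_add_iff 1).mpr ((summable_geometric_of_lt_one hρ0 hρ1).mul_left 4))
    (fun m => by positivity)
    (fun b m => mul_nonneg (div_nonneg (hΦ b _) b.cast_nonneg)
      (log_div_sub_one_nonneg (one_lt_pow₀ hr1 (mul_ne_zero (by omega) (by omega)))))
    ((eventually_gt_atTop 0).mono fun b hb m =>
      div_mul_log_le_of_mul_le (by exact_mod_cast hr) hd (by omega) (by exact_mod_cast hb)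
        (hΦ b _) (by exact_mod_cast hbound b (m + 1) (by omega)))
    (fun m => (hconv (m + 1)).mul_const _)
  -- the `m = 0` term is junk: `1 / (1 - 1) = 0` and `log 0 = 0`
  have hL0 : L 0 = 0 := by simp only [hL, mul_zero, pow_zero, sub_self, div_zero, log_zero]
  have hsum' : Summable fun m => φ m * L m := (summable_nat_add_iff 1).mp hsum
  refine ⟨hsum', ?_⟩
  rw [hsum'.tsum_eq_zero_add, hL0, mul_zero, zero_add]
  refine hlim.congr fun b => ?_
  rw [range_eq_Ico, sum_Ico_add' (fun m => Φ b m / b * L m), zero_add,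
    Ico_add_one_right_eq_Icc, mul_sum]
  exact sum_congr rfl fun m _ => by ring
end
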